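/- arXiv:2012.14810 — 7 statements merged into one kernel-verified Lean document; each statement's English description precedes it below -/
import Mathlib

section
/- The tangent cone to the cone of m×m symmetric positive semidefinite matrices at a point M of that cone equals the set of symmetric matrices N such that dᵀNd ≥ 0 for all d in the kernel of M. -/
open Matrix Filter Topology

/-! If `Q` is symmetric and positive definite on `ker M`, then `M + t • Q` is positive
semidefinite for all small `t ≥ 0`: by compactness of the unit sphere, near kernel directions
`Q` is positive, and away from them `M` is. Applied to `Q = N + ε • 1` with `ε → 0` this produces
the required sequences. Conversely, for `v ∈ ker M`, `vᵀ (M + t d) v = t vᵀ d v ≥ 0`, and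
`vᵀ N v ≥ 0` follows in the limit. -/

namespace Matrix

variable {n : Type*}

lemma IsSymm.of_tendsto {α : Type*} {l : Filter α} [l.NeBot] {d : α → Matrix n n ℝ}
    {N : Matrix n n ℝ} (hd : ∀ k, (d k).IsSymm) (hlim : Tendsto d l (𝓝 N)) : N.IsSymm :=
  (isClosed_eq continuous_id.matrix_transpose continuous_id).mem_of_tendsto hlim
    (Eventually.of_forall hd)

variable [Fintype n]

lemma dotProduct_mulVec_smul_self (A : Matrix n n ℝ) (c : ℝ) (v : n → ℝ) :
    (c • v) ⬝ᵥ A *ᵥ (c • v) = c ^ 2 * (v ⬝ᵥ A *ᵥ v) := by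
  simp only [mulVec_smul, dotProduct_smul, smul_dotProduct, smul_eq_mul]
  ring

lemma posSemidef_of_nonneg_on_unitSphere {A : Matrix n n ℝ} (hA : A.IsSymm)
    (h : ∀ v ∈ Metric.sphere (0 : n → ℝ) 1, 0 ≤ v ⬝ᵥ A *ᵥ v) : A.PosSemidef := by
  refine .of_dotProduct_mulVec_nonneg (isHermitian_iff_isSymm.mpr hA) fun x => ?_
  rw [star_trivial]
  rcases eq_or_ne x 0 with rfl | hx
  · simp
  have hunit : ‖x‖⁻¹ • x ∈ Metric.sphere (0 : n → ℝ) 1 := by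
    simpa using norm_smul_inv_norm (𝕜 := ℝ) hx
  have hx' : x = ‖x‖ • ‖x‖⁻¹ • x := by
    rw [smul_smul, mul_inv_cancel₀ (norm_ne_zero_iff.mpr hx), one_smul]
  rw [hx', dotProduct_mulVec_smul_self]
  exact mul_nonneg (sq_nonneg _) (h _ hunit)

lemma eventually_posSemidef_add_smul {M Q : Matrix n n ℝ} (hM : M.PosSemidef) (hQ : Q.IsSymm)
    (hQpos : ∀ v, v ≠ 0 → M *ᵥ v = 0 → 0 < v ⬝ᵥ Q *ᵥ v) :
    ∀ᶠ t in 𝓝 (0 : ℝ), 0 ≤ t → (M + t • Q).PosSemidef := by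
  have hsphere : ∀ᶠ t in 𝓝 (0 : ℝ), ∀ v ∈ Metric.sphere (0 : n → ℝ) 1,
      0 ≤ t → 0 ≤ v ⬝ᵥ (M + t • Q) *ᵥ v := by
    refine (isCompact_sphere _ _).eventually_forall_of_forall_eventually fun v hv => ?_
    rcases (hM.dotProduct_mulVec_nonneg v).lt_or_eq with hMv | hMv
    · have hcont : Continuous fun p : ℝ × (n → ℝ) => p.2 ⬝ᵥ (M + p.1 • Q) *ᵥ p.2 := by
        fun_prop
      have hv0 : 0 < v ⬝ᵥ (M + (0 : ℝ) • Q) *ᵥ v := by simpa using hMv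
      filter_upwards [hcont.continuousAt.eventually (lt_mem_nhds hv0)] with p hp _ using hp.le
    · have hker : M *ᵥ v = 0 := (hM.dotProduct_mulVec_zero_iff v).mp hMv.symm
      have hv0 : v ≠ 0 := ne_zero_of_mem_unit_sphere ⟨v, hv⟩
      have hcont : Continuous fun p : ℝ × (n → ℝ) => p.2 ⬝ᵥ Q *ᵥ p.2 := by fun_prop
      filter_upwards [hcont.continuousAt.eventually (lt_mem_nhds (hQpos v hv0 hker))]
        with p hQp ht
      have hMp := hM.dotProduct_mulVec_nonneg p.2
      rw [star_trivial] at hMp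
      rw [add_mulVec, smul_mulVec, dotProduct_add, dotProduct_smul, smul_eq_mul]
      exact add_nonneg hMp (mul_nonneg ht hQp.le)
  filter_upwards [hsphere] with t ht ht0
  exact posSemidef_of_nonneg_on_unitSphere
    ((isHermitian_iff_isSymm.mp hM.1).add (hQ.smul t)) fun v hv => ht v hv ht0

lemma dotProduct_mulVec_nonneg_of_posSemidef_add_smul {M A : Matrix n n ℝ} {t : ℝ} (ht : 0 < t)
    (h : (M + t • A).PosSemidef) {v : n → ℝ} (hv : M *ᵥ v = 0) : 0 ≤ v ⬝ᵥ A *ᵥ v := by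
  have hMA := h.dotProduct_mulVec_nonneg v
  rw [star_trivial, add_mulVec, hv, zero_add, smul_mulVec, dotProduct_smul, smul_eq_mul] at hMA
  exact nonneg_of_mul_nonneg_right hMA ht

lemma exists_tendsto_posSemidef_add_smul [DecidableEq n] {M N : Matrix n n ℝ}
    (hM : M.PosSemidef) (hN : N.IsSymm) (hker : ∀ v, M *ᵥ v = 0 → 0 ≤ v ⬝ᵥ N *ᵥ v) :
    ∃ (d : ℕ → Matrix n n ℝ) (t : ℕ → ℝ), (∀ k, (d k).IsSymm) ∧ (∀ k, 0 < t k) ∧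
      Tendsto d atTop (𝓝 N) ∧ Tendsto t atTop (𝓝 0) ∧ ∀ k, (M + t k • d k).PosSemidef := by
  set ε : ℕ → ℝ := fun k => 1 / ((k : ℝ) + 1)
  have hε : ∀ k, 0 < ε k := fun k => Nat.one_div_pos_of_nat
  have hεlim : Tendsto ε atTop (𝓝 0) := tendsto_one_div_add_atTop_nhds_zero_nat
  have hstep : ∀ k, ∃ t ∈ Set.Ioo 0 (ε k), (M + t • (N + ε k • 1)).PosSemidef := by
    intro k
    have hpos : ∀ v, v ≠ 0 → M *ᵥ v = 0 → 0 < v ⬝ᵥ (N + ε k • 1) *ᵥ v := fun v hv0 hv => by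
      rw [add_mulVec, smul_mulVec, one_mulVec, dotProduct_add, dotProduct_smul, smul_eq_mul]
      have hvv : 0 < v ⬝ᵥ v := by simpa using dotProduct_self_star_pos_iff.mpr hv0
      nlinarith [hker v hv, hε k]
    have hev := eventually_posSemidef_add_smul hM (hN.add (isSymm_one.smul _)) hpos
    have hsmall : ∀ᶠ t in 𝓝[>] (0 : ℝ), t ∈ Set.Ioo 0 (ε k) := Ioo_mem_nhdsGT (hε k)
    obtain ⟨t, ht, hpsd⟩ := (hsmall.and (nhdsWithin_le_nhds hev)).exists
    exact ⟨t, ht, hpsd ht.1.le⟩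
  choose t ht hpsd using hstep
  refine ⟨fun k => N + ε k • 1, t, fun k => hN.add (isSymm_one.smul _), fun k => (ht k).1,
    ?_, ?_, hpsd⟩
  · simpa using tendsto_const_nhds.add (hεlim.smul_const (1 : Matrix n n ℝ))
  · exact tendsto_of_tendsto_of_tendsto_of_le_of_le tendsto_const_nhds hεlim
      (fun k => (ht k).1.le) fun k => (ht k).2.le

end Matrix

/-- The (Bouligand) tangent cone to the PSD cone at `M ∈ S^m_+`, computed within the
space of symmetric matrices, equals `{N ∈ S^m : dᵀ N d ≥ 0 for all d ∈ Ker M}`. -/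
theorem tangent_cone_psd (m : ℕ) (M : Matrix (Fin m) (Fin m) ℝ) (hM : M.PosSemidef) :
    {N : Matrix (Fin m) (Fin m) ℝ |
      ∃ (d : ℕ → Matrix (Fin m) (Fin m) ℝ) (t : ℕ → ℝ),
        (∀ k, (d k).IsSymm) ∧ (∀ k, 0 < t k) ∧
        Tendsto d atTop (𝓝 N) ∧ Tendsto t atTop (𝓝 0) ∧
        ∀ k, (M + t k • d k).PosSemidef} =
    {N : Matrix (Fin m) (Fin m) ℝ |
      N.IsSymm ∧ ∀ v : Fin m → ℝ, M.mulVec v = 0 → 0 ≤ v ⬝ᵥ N.mulVec v} := by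
  ext N
  constructor
  · rintro ⟨d, t, hd, ht, hdlim, -, hpsd⟩
    refine ⟨IsSymm.of_tendsto hd hdlim, fun v hv => ?_⟩
    have hcont : Continuous fun A : Matrix (Fin m) (Fin m) ℝ => v ⬝ᵥ A *ᵥ v := by fun_prop
    exact ge_of_tendsto ((hcont.tendsto N).comp hdlim) (Eventually.of_forall fun k =>
      dotProduct_mulVec_nonneg_of_posSemidef_add_smul (ht k) (hpsd k) hv)
  · rintro ⟨hN, hker⟩
    exact exists_tendsto_posSemidef_add_smul hM hN hker
end

section
/- Let M ∈ S^m_+ have rank r and let E be an m×(m−r) matrix whose orthonormal columns span Ker M. Then the lineality space (largest linear subspace) of the tangent cone T_{S^m_+}(M) equals {N ∈ S^m : Eᵀ N E = 0}. -/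
/-!
A symmetric `N` lies in both the cone and its negative exactly when `v ↦ vᵀ N v` vanishes on
`Ker M`. Since `M E = 0` and `rank E = m - r = dim Ker M`, the columns of `E` span `Ker M`, so
this says `cᵀ (Eᵀ N E) c = 0` for every `c`; by polarization, a symmetric matrix with vanishing
quadratic form is zero.
-/

open Matrix

namespace Matrix

variable {R : Type*} {n p : Type*} [Fintype n]

theorem dotProduct_mulVec_mulVec_self [Fintype p] [CommRing R] (N : Matrix n n R) (E : Matrix n p R)
    (c : p → R) : (E *ᵥ c) ⬝ᵥ N *ᵥ (E *ᵥ c) = c ⬝ᵥ (Eᵀ * N * E) *ᵥ c := by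
  simp only [← mulVec_mulVec, dotProduct_mulVec c, vecMul_transpose]

theorem IsSymm.transpose_mul_mul [CommSemiring R] {N : Matrix n n R} (hN : N.IsSymm)
    (E : Matrix n p R) : (Eᵀ * N * E).IsSymm := by
  simp only [IsSymm, transpose_mul, transpose_transpose, hN.eq, Matrix.mul_assoc]

theorem IsSymm.eq_zero_iff_forall_dotProduct_mulVec_self [CommRing R] [IsAddTorsionFree R]
    [DecidableEq n] {A : Matrix n n R} (hA : A.IsSymm) : A = 0 ↔ ∀ c, c ⬝ᵥ A *ᵥ c = 0 := by
  refine ⟨fun h c => by simp [h], fun h => ?_⟩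
  have polar : ∀ c d, c ⬝ᵥ A *ᵥ d = 0 := by
    intro c d
    have hswap : d ⬝ᵥ A *ᵥ c = c ⬝ᵥ A *ᵥ d := by
      rw [dotProduct_mulVec, ← mulVec_transpose, hA.eq, dotProduct_comm]
    have hcd := h (c + d)
    rw [mulVec_add, dotProduct_add, add_dotProduct, add_dotProduct, h c, h d, hswap, zero_add,
      add_zero, ← two_nsmul] at hcd
    exact nsmul_right_injective two_ne_zero (hcd.trans (smul_zero 2).symm)
  ext i j
  simpa [mulVec_single, dotProduct_single] using polar (Pi.single i 1) (Pi.single j 1)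

theorem rank_eq_card_width_of_mul_eq_one [Fintype p] [CommRing R] [StrongRankCondition R] [DecidableEq p]
    {L : Matrix p n R} {E : Matrix n p R} (hLE : L * E = 1) : E.rank = Fintype.card p :=
  le_antisymm E.rank_le_card_width (by simpa [hLE] using rank_mul_le_right L E)

theorem ker_mulVecLin_eq_range_of_mul_eq_zero {K m : Type*} [Fintype p] [Field K] [Fintype m]
    {M : Matrix m n K} {E : Matrix n p K} (hME : M * E = 0)
    (hrank : M.rank + E.rank = Fintype.card n) :
    LinearMap.ker M.mulVecLin = LinearMap.range E.mulVecLin := by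
  refine (Submodule.eq_of_le_of_finrank_le ?_ ?_).symm
  · rintro _ ⟨c, rfl⟩
    simp [mulVec_mulVec, hME]
  · have := M.mulVecLin.finrank_range_add_finrank_ker
    rw [Module.finrank_fintype_fun_eq_card] at this
    change M.rank + _ = _ at this
    change _ ≤ E.rank
    omega

end Matrix

theorem lineality_space_tangent_cone_general (m r : ℕ)
    (M : Matrix (Fin m) (Fin m) ℝ) (hrank : M.rank = r)
    (E : Matrix (Fin m) (Fin (m - r)) ℝ) (hE : Eᵀ * E = 1) (hker : M * E = 0) :
    {N : Matrix (Fin m) (Fin m) ℝ | N.IsSymm ∧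
        (∀ v : Fin m → ℝ, M.mulVec v = 0 → 0 ≤ v ⬝ᵥ N.mulVec v) ∧
        (∀ v : Fin m → ℝ, M.mulVec v = 0 → 0 ≤ v ⬝ᵥ (-N).mulVec v)} =
    {N : Matrix (Fin m) (Fin m) ℝ | N.IsSymm ∧ Eᵀ * N * E = 0} := by
  have hrank_add : M.rank + E.rank = Fintype.card (Fin m) := by
    have := M.rank_le_width
    rw [rank_eq_card_width_of_mul_eq_one hE, Fintype.card_fin, Fintype.card_fin]
    omega
  have hkerM : ∀ v, M *ᵥ v = 0 ↔ ∃ c, E *ᵥ c = v := fun v => by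
    simpa using SetLike.ext_iff.mp (ker_mulVecLin_eq_range_of_mul_eq_zero hker hrank_add) v
  ext N
  refine and_congr_right fun hN => ?_
  rw [(hN.transpose_mul_mul E).eq_zero_iff_forall_dotProduct_mulVec_self]
  simp only [neg_mulVec, dotProduct_neg, neg_nonneg, ← forall_and, ← le_antisymm_iff, hkerM,
    forall_exists_index, forall_apply_eq_imp_iff, dotProduct_mulVec_mulVec_self, @eq_comm ℝ 0]

/-- Let `M ∈ S^m_+` have rank `r` and `E` span `Ker M` orthonormally.  The lineality
space `K ∩ (-K)` of the tangent cone `K = {N ∈ S^m : dᵀNd ≥ 0 ∀ d ∈ Ker M}` equals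
`{N ∈ S^m : Eᵀ N E = 0}`. -/
theorem lineality_space_tangent_cone (m r : ℕ)
    (M : Matrix (Fin m) (Fin m) ℝ) (hM : M.PosSemidef) (hrank : M.rank = r)
    (E : Matrix (Fin m) (Fin (m - r)) ℝ) (hE : Eᵀ * E = 1) (hker : M * E = 0) :
    {N : Matrix (Fin m) (Fin m) ℝ | N.IsSymm ∧
        (∀ v : Fin m → ℝ, M.mulVec v = 0 → 0 ≤ v ⬝ᵥ N.mulVec v) ∧
        (∀ v : Fin m → ℝ, M.mulVec v = 0 → 0 ≤ v ⬝ᵥ (-N).mulVec v)} =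
    {N : Matrix (Fin m) (Fin m) ℝ | N.IsSymm ∧ Eᵀ * N * E = 0} :=
  lineality_space_tangent_cone_general m r M hrank E hE hker
end

section
/- The orthogonal projection (in Frobenius norm) of a symmetric matrix M onto the PSD cone equals Σᵢ max(λᵢ(M), 0) uᵢ uᵢᵀ, where M = Σᵢ λᵢ(M) uᵢ uᵢᵀ is a spectral decomposition of M with orthonormal eigenvectors uᵢ. -/
/-!
Write `P = Σᵢ max(λᵢ, 0) uᵢuᵢᵀ`. Then `M - P = Σᵢ min(λᵢ, 0) uᵢuᵢᵀ` is negative semidefinite,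
so `tr((M - P) Q) ≤ 0` for every PSD `Q`, while `tr((M - P) P) = Σᵢ min(λᵢ, 0) max(λᵢ, 0) = 0`
by orthonormality. Hence `⟪M - P, P - Q⟫ ≥ 0` for the Frobenius inner product, and expanding
`M - Q = (M - P) + (P - Q)` gives `‖M - Q‖² ≥ ‖M - P‖² + ‖P - Q‖²`, with equality only if `Q = P`.
-/

open Matrix

namespace Matrix

section CommRing

variable {n ι R : Type*} [Fintype n] [Fintype ι] [CommRing R]

theorem trace_sub_mul_transpose_sub (A B C : Matrix n n R) :
    ((A - C) * (A - C)ᵀ).trace =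
      ((A - B) * (A - B)ᵀ).trace + 2 * ((A - B) * (B - C)ᵀ).trace +
        ((B - C) * (B - C)ᵀ).trace := by
  have hswap : ((B - C) * (A - B)ᵀ).trace = ((A - B) * (B - C)ᵀ).trace := by
    rw [← trace_transpose, transpose_mul, transpose_transpose]
  rw [show A - C = (A - B) + (B - C) by abel, transpose_add, add_mul, mul_add, mul_add,
    trace_add, trace_add, trace_add, hswap]
  ring

theorem trace_sum_smul_vecMulVec_mul (c : ι → R) (u : ι → n → R) (Q : Matrix n n R) :
    ((∑ i, c i • vecMulVec (u i) (u i)) * Q).trace = ∑ i, c i * (u i ⬝ᵥ Q *ᵥ u i) := by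
  rw [Finset.sum_mul, trace_sum]
  refine Finset.sum_congr rfl fun i _ => ?_
  rw [smul_mul_assoc, trace_smul, vecMulVec_mul, trace_vecMulVec, dotProduct_mulVec,
    dotProduct_comm, smul_eq_mul]

variable [DecidableEq ι] {u : ι → n → R}

theorem sum_smul_vecMulVec_mulVec_of_orthonormal
    (hu : ∀ i j, u i ⬝ᵥ u j = if i = j then 1 else 0) (c : ι → R) (i : ι) :
    (∑ j, c j • vecMulVec (u j) (u j)) *ᵥ u i = c i • u i := by
  simp only [sum_mulVec, smul_mulVec, vecMulVec_mulVec, op_smul_eq_smul, hu, ite_smul,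
    one_smul, zero_smul, smul_ite, smul_zero, Finset.sum_ite_eq', Finset.mem_univ, if_true]

theorem trace_sum_smul_vecMulVec_mul_sum_of_orthonormal
    (hu : ∀ i j, u i ⬝ᵥ u j = if i = j then 1 else 0) (a b : ι → R) :
    ((∑ i, a i • vecMulVec (u i) (u i)) * ∑ i, b i • vecMulVec (u i) (u i)).trace =
      ∑ i, a i * b i := by
  rw [trace_sum_smul_vecMulVec_mul]
  refine Finset.sum_congr rfl fun i _ => ?_
  rw [sum_smul_vecMulVec_mulVec_of_orthonormal hu, dotProduct_smul, hu, if_pos rfl,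
    smul_eq_mul, mul_one]

end CommRing

section Real

variable {m n ι : Type*}

theorem PosSemidef.transpose_eq_self {Q : Matrix n n ℝ} (hQ : Q.PosSemidef) : Qᵀ = Q := by
  simpa only [IsHermitian, conjTranspose_eq_transpose_of_trivial] using hQ.1

variable [Fintype m] [Fintype n] [Fintype ι]

theorem trace_mul_transpose_self_nonneg (A : Matrix m n ℝ) : 0 ≤ (A * Aᵀ).trace := by
  simpa only [conjTranspose_eq_transpose_of_trivial] using
    (posSemidef_self_mul_conjTranspose A).trace_nonneg

theorem trace_mul_transpose_self_eq_zero_iff {A : Matrix m n ℝ} :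
    (A * Aᵀ).trace = 0 ↔ A = 0 := by
  simpa only [conjTranspose_eq_transpose_of_trivial] using
    trace_mul_conjTranspose_self_eq_zero_iff (A := A)

theorem posSemidef_sum_smul_vecMulVec {c : ι → ℝ} (hc : ∀ i, 0 ≤ c i) (u : ι → n → ℝ) :
    (∑ i, c i • vecMulVec (u i) (u i)).PosSemidef :=
  posSemidef_sum _ fun i _ => by
    simpa only [star_trivial] using (posSemidef_vecMulVec_self_star (u i)).smul (hc i)

theorem trace_sum_smul_vecMulVec_mul_nonpos {c : ι → ℝ} (hc : ∀ i, c i ≤ 0) (u : ι → n → ℝ)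
    {Q : Matrix n n ℝ} (hQ : Q.PosSemidef) :
    ((∑ i, c i • vecMulVec (u i) (u i)) * Q).trace ≤ 0 := by
  rw [trace_sum_smul_vecMulVec_mul]
  exact Finset.sum_nonpos fun i _ => mul_nonpos_of_nonpos_of_nonneg (hc i)
    (hQ.dotProduct_mulVec_nonneg (u i))

end Real

end Matrix

theorem projection_onto_psd_cone_general (m : ℕ) (M : Matrix (Fin m) (Fin m) ℝ)
    (lam : Fin m → ℝ) (u : Fin m → Fin m → ℝ)
    (horth : ∀ i j, u i ⬝ᵥ u j = if i = j then (1 : ℝ) else 0)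
    (hspec : M = ∑ i, lam i • vecMulVec (u i) (u i)) :
    (∑ i, max (lam i) 0 • vecMulVec (u i) (u i)).PosSemidef ∧
    (∀ Q : Matrix (Fin m) (Fin m) ℝ, Q.PosSemidef →
      ((M - ∑ i, max (lam i) 0 • vecMulVec (u i) (u i)) *
        (M - ∑ i, max (lam i) 0 • vecMulVec (u i) (u i))ᵀ).trace ≤
      ((M - Q) * (M - Q)ᵀ).trace) ∧
    (∀ Q : Matrix (Fin m) (Fin m) ℝ, Q.PosSemidef →
      ((M - Q) * (M - Q)ᵀ).trace =
        ((M - ∑ i, max (lam i) 0 • vecMulVec (u i) (u i)) *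
          (M - ∑ i, max (lam i) 0 • vecMulVec (u i) (u i))ᵀ).trace →
      Q = ∑ i, max (lam i) 0 • vecMulVec (u i) (u i)) := by
  set P := ∑ i, max (lam i) 0 • vecMulVec (u i) (u i)
  have hP : P.PosSemidef := posSemidef_sum_smul_vecMulVec (fun i => le_max_right _ _) u
  have hMP : M - P = ∑ i, (lam i - max (lam i) 0) • vecMulVec (u i) (u i) := by
    simp only [hspec, P, ← Finset.sum_sub_distrib, sub_smul]
  have hcross (Q : Matrix (Fin m) (Fin m) ℝ) (hQ : Q.PosSemidef) :
      0 ≤ ((M - P) * (P - Q)ᵀ).trace := by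
    have hslack : ((M - P) * P).trace = 0 := by
      rw [hMP, trace_sum_smul_vecMulVec_mul_sum_of_orthonormal horth]
      refine Finset.sum_eq_zero fun i _ => ?_
      rcases le_total (lam i) 0 with h | h <;> simp [h]
    have hnonpos : ((M - P) * Q).trace ≤ 0 := by
      rw [hMP]
      exact trace_sum_smul_vecMulVec_mul_nonpos (fun i => sub_nonpos.2 (le_max_left _ _)) u hQ
    rw [transpose_sub, hP.transpose_eq_self, hQ.transpose_eq_self, mul_sub, trace_sub]
    linarith
  have hpyth (Q : Matrix (Fin m) (Fin m) ℝ) (hQ : Q.PosSemidef) :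
      ((M - P) * (M - P)ᵀ).trace + ((P - Q) * (P - Q)ᵀ).trace ≤ ((M - Q) * (M - Q)ᵀ).trace := by
    rw [trace_sub_mul_transpose_sub M P Q]
    linarith [hcross Q hQ]
  refine ⟨hP, fun Q hQ => ?_, fun Q hQ heq => ?_⟩
  · linarith [hpyth Q hQ, trace_mul_transpose_self_nonneg (P - Q)]
  · have hzero : ((P - Q) * (P - Q)ᵀ).trace = 0 :=
      le_antisymm (by linarith [hpyth Q hQ]) (trace_mul_transpose_self_nonneg _)
    exact (sub_eq_zero.1 (trace_mul_transpose_self_eq_zero_iff.1 hzero)).symm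

/-- The orthogonal projection (in the Frobenius norm) of a symmetric matrix `M` onto
the PSD cone is `Σᵢ max(λᵢ, 0) uᵢ uᵢᵀ`, where `M = Σᵢ λᵢ uᵢ uᵢᵀ` is a spectral
decomposition with orthonormal eigenvectors `uᵢ`: it is PSD, it minimizes the
Frobenius distance to `M` among PSD matrices, and it is the unique such minimizer. -/
theorem projection_onto_psd_cone (m : ℕ) (M : Matrix (Fin m) (Fin m) ℝ)
    (lam : Fin m → ℝ) (u : Fin m → Fin m → ℝ) (hM : M.IsSymm)
    (horth : ∀ i j, u i ⬝ᵥ u j = if i = j then (1 : ℝ) else 0)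
    (hspec : M = ∑ i, lam i • vecMulVec (u i) (u i)) :
    (∑ i, max (lam i) 0 • vecMulVec (u i) (u i)).PosSemidef ∧
    (∀ Q : Matrix (Fin m) (Fin m) ℝ, Q.PosSemidef →
      ((M - ∑ i, max (lam i) 0 • vecMulVec (u i) (u i)) *
        (M - ∑ i, max (lam i) 0 • vecMulVec (u i) (u i))ᵀ).trace ≤
      ((M - Q) * (M - Q)ᵀ).trace) ∧
    (∀ Q : Matrix (Fin m) (Fin m) ℝ, Q.PosSemidef →
      ((M - Q) * (M - Q)ᵀ).trace =
        ((M - ∑ i, max (lam i) 0 • vecMulVec (u i) (u i)) *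
          (M - ∑ i, max (lam i) 0 • vecMulVec (u i) (u i))ᵀ).trace →
      Q = ∑ i, max (lam i) 0 • vecMulVec (u i) (u i)) :=
  projection_onto_psd_cone_general m M lam u horth hspec
end

section
/- Let G : ℝⁿ → S^m be differentiable at x̄ with G(x̄) of rank r < m, and let E ∈ ℝ^{m×(m−r)} span Ker G(x̄) orthonormally. The linear map ψ: ℝⁿ → S^{m−r}, ψ(d) = Eᵀ (DG(x̄)[d]) E, is surjective if and only if Im DG(x̄) + lin(T_{S^m_+}(G(x̄))) = S^m. -/
/-!
Since `Eᵀ * E = 1`, the compression `S ↦ Eᵀ * S * E` maps symmetric matrices onto symmetric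
matrices, with right inverse `T ↦ E * T * Eᵀ`. A splitting `S = M + N` with `Eᵀ * N * E = 0`
says exactly that `S` and `M` have the same compression, so every symmetric `S` splits with
`M` in the image of `DG(x̄)` iff every compression is the compression of such an `M`.
Here `A ℓ` plays `∂G/∂x_ℓ(x̄)`, so `∑ ℓ, d ℓ • A ℓ` is `DG(x̄)[d]`.
-/

open Matrix

namespace Matrix

variable {m k R : Type*}

theorem IsSymm.transpose_mul_mul_s6 [Fintype m] [CommSemiring R] {S : Matrix m m R} (hS : S.IsSymm)
    (B : Matrix m k R) : (Bᵀ * S * B).IsSymm := by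
  rw [IsSymm, transpose_mul, transpose_mul, transpose_transpose, hS.eq, Matrix.mul_assoc]

theorem isSymm_sum [AddCommMonoid R] {ι : Type*} (s : Finset ι) (A : ι → Matrix m m R)
    (hA : ∀ i ∈ s, (A i).IsSymm) : (∑ i ∈ s, A i).IsSymm := by
  rw [IsSymm, transpose_sum]
  exact Finset.sum_congr rfl fun i hi => (hA i hi).eq

theorem transpose_mul_mul_transpose_mul [Fintype m] [Fintype k] [CommSemiring R] [DecidableEq k]
    {E : Matrix m k R} (hE : Eᵀ * E = 1) (S : Matrix k k R) : Eᵀ * (E * S * Eᵀ) * E = S := by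
  simp only [Matrix.mul_assoc, hE, Matrix.mul_one, ← Matrix.mul_assoc Eᵀ E, Matrix.one_mul]

end Matrix

section Compression

variable {D m k R : Type*} [Fintype m] [CommRing R]

theorem exists_add_of_compression_surjective {f : D → Matrix m m R} (hf : ∀ d, (f d).IsSymm)
    {E : Matrix m k R}
    (h : ∀ T : Matrix k k R, T.IsSymm → ∃ d, Eᵀ * f d * E = T) (S : Matrix m m R)
    (hS : S.IsSymm) : ∃ d, ∃ N : Matrix m m R, N.IsSymm ∧ Eᵀ * N * E = 0 ∧ S = f d + N := by
  obtain ⟨d, hd⟩ := h (Eᵀ * S * E) (hS.transpose_mul_mul_s6 E)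
  refine ⟨d, S - f d, hS.sub (hf d), ?_, by abel⟩
  rw [Matrix.mul_sub, Matrix.sub_mul, hd, sub_self]

theorem compression_surjective_of_exists_add [Fintype k] [DecidableEq k] {f : D → Matrix m m R}
    {E : Matrix m k R} (hE : Eᵀ * E = 1)
    (h : ∀ S : Matrix m m R, S.IsSymm →
      ∃ d, ∃ N : Matrix m m R, N.IsSymm ∧ Eᵀ * N * E = 0 ∧ S = f d + N)
    (T : Matrix k k R) (hT : T.IsSymm) : ∃ d, Eᵀ * f d * E = T := by
  obtain ⟨d, N, -, hN, hS⟩ := h (E * T * Eᵀ) (by simpa using hT.transpose_mul_mul_s6 Eᵀ)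
  refine ⟨d, ?_⟩
  have hT' := transpose_mul_mul_transpose_mul hE T
  rwa [hS, Matrix.mul_add, Matrix.add_mul, hN, add_zero] at hT'

end Compression

theorem psi_surjective_iff_nondegeneracy_general (n m r : ℕ)
    (E : Matrix (Fin m) (Fin (m - r)) ℝ) (hE : Eᵀ * E = 1)
    (A : Fin n → Matrix (Fin m) (Fin m) ℝ) (hA : ∀ ℓ, (A ℓ).IsSymm) :
    (∀ S : Matrix (Fin (m - r)) (Fin (m - r)) ℝ, S.IsSymm →
        ∃ d : Fin n → ℝ, Eᵀ * (∑ ℓ, d ℓ • A ℓ) * E = S) ↔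
    (∀ S : Matrix (Fin m) (Fin m) ℝ, S.IsSymm →
        ∃ (d : Fin n → ℝ) (N : Matrix (Fin m) (Fin m) ℝ),
          N.IsSymm ∧ Eᵀ * N * E = 0 ∧ S = (∑ ℓ, d ℓ • A ℓ) + N) :=
  ⟨exists_add_of_compression_surjective
      fun d => isSymm_sum _ _ fun ℓ _ => (hA ℓ).smul (d ℓ),
    compression_surjective_of_exists_add hE⟩

/-- Let `G(x̄)` be PSD of rank `r < m`, with partial derivatives `A ℓ = ∂G/∂x_ℓ(x̄)`,
and let `E` span `Ker G(x̄)` orthonormally.  The map `ψ(d) = Eᵀ (DG(x̄)[d]) E` is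
surjective onto `S^{m-r}` iff `Im DG(x̄) + lin(T_{S^m_+}(G(x̄))) = S^m`, where the
lineality space is `{N ∈ S^m : Eᵀ N E = 0}`. -/
theorem psi_surjective_iff_nondegeneracy (n m r : ℕ) (hr : r < m)
    (Gbar : Matrix (Fin m) (Fin m) ℝ) (hG : Gbar.PosSemidef) (hrank : Gbar.rank = r)
    (E : Matrix (Fin m) (Fin (m - r)) ℝ) (hE : Eᵀ * E = 1) (hker : Gbar * E = 0)
    (A : Fin n → Matrix (Fin m) (Fin m) ℝ) (hA : ∀ ℓ, (A ℓ).IsSymm) :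
    (∀ S : Matrix (Fin (m - r)) (Fin (m - r)) ℝ, S.IsSymm →
        ∃ d : Fin n → ℝ, Eᵀ * (∑ ℓ, d ℓ • A ℓ) * E = S) ↔
    (∀ S : Matrix (Fin m) (Fin m) ℝ, S.IsSymm →
        ∃ (d : Fin n → ℝ) (N : Matrix (Fin m) (Fin m) ℝ),
          N.IsSymm ∧ Eᵀ * N * E = 0 ∧ S = (∑ ℓ, d ℓ • A ℓ) + N) :=
  psi_surjective_iff_nondegeneracy_general n m r E hE A hA
end

section
/- Let A : ℝⁿ → S^m be a linear map into symmetric matrices and E ∈ ℝ^{m×p} a matrix with orthonormal columns. The linear map ψ : ℝⁿ → S^p, ψ(d) = Eᵀ A(d) E, is surjective if and only if for every orthogonal p×p matrix C, with columns c_1, …, c_p, the n-vectors vᵢ := [ c_iᵀ Eᵀ A(e_ℓ) E c_i ]_{ℓ=1..n}, i = 1, …, p, are linearly independent. -/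
open Matrix

private lemma trace_conj_diag {p : ℕ} (C : Matrix (Fin p) (Fin p) ℝ) (t : Fin p → ℝ)
    (X : Matrix (Fin p) (Fin p) ℝ) :
    trace ((C * diagonal t * Cᵀ) * X) = ∑ i, t i * (Cᵀ * X * C) i i := by
  rw [show C * diagonal t * Cᵀ * X = (C * diagonal t) * (Cᵀ * X) by rw [Matrix.mul_assoc],
    trace_mul_comm, show Cᵀ * X * (C * diagonal t) = (Cᵀ * X * C) * diagonal t by
      simp [Matrix.mul_assoc], trace_mul_comm]
  simp [trace, diag, diagonal_mul]

private lemma dot_eq_conj_diag_entry {q m : ℕ} (X : Matrix (Fin m) (Fin m) ℝ)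
    (B : Matrix (Fin m) (Fin q) ℝ) (i : Fin q) :
    ((fun k => B k i) ⬝ᵥ X.mulVec (fun k => B k i)) = (Bᵀ * X * B) i i := by
  simp only [dotProduct, mulVec, mul_apply, transpose_apply, Finset.sum_mul, Finset.mul_sum]
  rw [Finset.sum_comm]
  exact Finset.sum_congr rfl fun j _ => Finset.sum_congr rfl fun k _ => by ring

-- a symmetric matrix with trace (T*T) = 0 is zero
private lemma symm_trace_sq_zero {p : ℕ} (T : Matrix (Fin p) (Fin p) ℝ) (hT : T.IsSymm)
    (h : trace (T * T) = 0) : T = 0 := by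
  have h2 : ∑ i, ∑ j, T j i * T j i = 0 := by
    rw [← h]; nth_rewrite 1 [← hT]
    simp [trace, diag, mul_apply, transpose_apply]
  ext j i
  have hnn : ∀ i ∈ (Finset.univ : Finset (Fin p)), (0:ℝ) ≤ ∑ j, T j i * T j i :=
    fun i _ => Finset.sum_nonneg fun j _ => mul_self_nonneg _
  have h3 := (Finset.sum_eq_zero_iff_of_nonneg hnn).mp h2 i (Finset.mem_univ i)
  have h4 := (Finset.sum_eq_zero_iff_of_nonneg
    (fun j _ => mul_self_nonneg (T j i))).mp h3 j (Finset.mem_univ j)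
  simpa using mul_self_eq_zero.mp h4

-- separating functional given by a symmetric matrix via the trace pairing
private lemma exists_symm_trace_functional {p n : ℕ} (M : Fin n → Matrix (Fin p) (Fin p) ℝ)
    (hM : ∀ ℓ, (M ℓ).IsSymm) (S : Matrix (Fin p) (Fin p) ℝ) (hS : S.IsSymm)
    (hnot : S ∉ Submodule.span ℝ (Set.range M)) :
    ∃ T : Matrix (Fin p) (Fin p) ℝ, T.IsSymm ∧ (∀ ℓ, trace (T * M ℓ) = 0) ∧ trace (T * S) ≠ 0 := by
  -- dual functional vanishing on span and nonzero at S
  obtain ⟨φ, hφ0, hφS⟩ : ∃ φ : Module.Dual ℝ (Matrix (Fin p) (Fin p) ℝ),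
      (∀ ℓ, φ (M ℓ) = 0) ∧ φ S ≠ 0 := by
    set W := Submodule.span ℝ (Set.range M)
    have hq : Submodule.Quotient.mk (p := W) S ≠ 0 := by
      simpa [Submodule.Quotient.mk_eq_zero] using hnot
    obtain ⟨g, hg⟩ := not_forall.mp
      (fun h => hq ((Module.forall_dual_apply_eq_zero_iff ℝ _).mp h))
    refine ⟨g.comp W.mkQ, fun ℓ => ?_, hg⟩
    have : (M ℓ) ∈ W := Submodule.subset_span (Set.mem_range_self ℓ)
    simp [Submodule.mkQ_apply, (Submodule.Quotient.mk_eq_zero W).mpr this]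
  -- represent φ by a matrix U via the trace pairing
  set U : Matrix (Fin p) (Fin p) ℝ := Matrix.of fun i j => φ (single i j 1) with hU
  have hrep : ∀ X : Matrix (Fin p) (Fin p) ℝ, φ X = ∑ i, ∑ j, X i j * U i j := by
    intro X
    nth_rewrite 1 [matrix_eq_sum_single X]
    rw [map_sum]
    refine Finset.sum_congr rfl fun i _ => ?_
    rw [map_sum]
    refine Finset.sum_congr rfl fun j _ => ?_
    rw [show single i j (X i j) = (X i j) • single i j 1 by
      rw [smul_single]; simp]
    rw [_root_.map_smul]
    simp [hU]
  set T : Matrix (Fin p) (Fin p) ℝ := (2:ℝ)⁻¹ • (U + Uᵀ) with hT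
  have hTsymm : T.IsSymm := by
    simp [hT, Matrix.IsSymm, transpose_smul, transpose_add, add_comm]
  have key : ∀ Y : Matrix (Fin p) (Fin p) ℝ, Y.IsSymm → trace (T * Y) = φ Y := by
    intro Y hY
    have htr : trace (T * Y) = ∑ i, ∑ j, T i j * Y j i := by
      simp [trace, diag, mul_apply]
    rw [htr, hrep Y]
    have hswap : ∑ i, ∑ j, U j i * Y j i = ∑ i, ∑ j, Y i j * U i j := by
      rw [Finset.sum_comm]
      exact Finset.sum_congr rfl fun i _ => Finset.sum_congr rfl fun j _ => by ring
    have hY' : ∀ i j, Y j i = Y i j := fun i j => by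
      conv_lhs => rw [← hY]
      rfl
    calc ∑ i, ∑ j, T i j * Y j i
        = ∑ i, ∑ j, ((2:ℝ)⁻¹ * (U i j * Y j i) + (2:ℝ)⁻¹ * (U j i * Y j i)) := by
          refine Finset.sum_congr rfl fun i _ => Finset.sum_congr rfl fun j _ => ?_
          simp [hT, transpose_apply]; ring
      _ = (2:ℝ)⁻¹ * (∑ i, ∑ j, U i j * Y j i) + (2:ℝ)⁻¹ * (∑ i, ∑ j, U j i * Y j i) := by
          simp [Finset.sum_add_distrib, Finset.mul_sum]
      _ = (2:ℝ)⁻¹ * (∑ i, ∑ j, Y i j * U i j) + (2:ℝ)⁻¹ * (∑ i, ∑ j, Y i j * U i j) := by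
          rw [hswap]
          congr 1
          congr 1
          exact Finset.sum_congr rfl fun i _ => Finset.sum_congr rfl fun j _ => by rw [mul_comm, hY' i j]
      _ = ∑ i, ∑ j, Y i j * U i j := by ring
  exact ⟨T, hTsymm, fun ℓ => by rw [key _ (hM ℓ), hφ0],
    by rw [key _ hS]; exact hφS⟩


private lemma spectral_real {p : ℕ} (T : Matrix (Fin p) (Fin p) ℝ) (hT : T.IsSymm) :
    ∃ C t, Cᵀ * C = 1 ∧ T = C * diagonal t * Cᵀ := by
  have hH : T.IsHermitian := by
    rwa [Matrix.IsHermitian, conjTranspose_eq_transpose_of_trivial]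
  refine ⟨(hH.eigenvectorUnitary : Matrix (Fin p) (Fin p) ℝ), hH.eigenvalues, ?_, ?_⟩
  · have := (Matrix.mem_unitaryGroup_iff').mp hH.eigenvectorUnitary.2
    rwa [Matrix.star_eq_conjTranspose, conjTranspose_eq_transpose_of_trivial] at this
  · have h := hH.spectral_theorem
    rw [Unitary.conjStarAlgAut_apply, Matrix.star_eq_conjTranspose, conjTranspose_eq_transpose_of_trivial] at h
    convert h using 3
    rfl


/-- Let `A(e_ℓ) = A ℓ ∈ S^m` and let `E` have orthonormal columns.  The map
`ψ(d) = Eᵀ (Σ_ℓ d_ℓ A_ℓ) E` is surjective onto `S^p` iff for every orthogonal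
`p × p` matrix `C` the diagonal vectors `v_i`, `(v_i)_ℓ = (ECc_i)ᵀ A_ℓ (ECc_i)`
(`c_i` the columns of `C`, i.e. over all orthonormal bases `B = EC` of `Im E`),
are linearly independent. -/
theorem psi_surjective_iff_diag_li_all_bases (n m p : ℕ)
    (A : Fin n → Matrix (Fin m) (Fin m) ℝ) (hA : ∀ ℓ, (A ℓ).IsSymm)
    (E : Matrix (Fin m) (Fin p) ℝ) (hE : Eᵀ * E = 1) :
    (∀ S : Matrix (Fin p) (Fin p) ℝ, S.IsSymm →
        ∃ d : Fin n → ℝ, Eᵀ * (∑ ℓ, d ℓ • A ℓ) * E = S) ↔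
    (∀ C : Matrix (Fin p) (Fin p) ℝ, Cᵀ * C = 1 →
        LinearIndependent ℝ (fun i : Fin p => fun ℓ : Fin n =>
          (fun k => (E * C) k i) ⬝ᵥ (A ℓ).mulVec (fun k => (E * C) k i))) := by
  set M : Fin n → Matrix (Fin p) (Fin p) ℝ := fun ℓ => Eᵀ * A ℓ * E with hMdef
  have hMsymm : ∀ ℓ, (M ℓ).IsSymm := by
    intro ℓ
    simp only [hMdef, Matrix.IsSymm, transpose_mul, transpose_transpose, (hA ℓ).eq]
    rw [Matrix.mul_assoc]
  have hψ : ∀ d : Fin n → ℝ, Eᵀ * (∑ ℓ, d ℓ • A ℓ) * E = ∑ ℓ, d ℓ • M ℓ := by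
    intro d
    rw [Matrix.mul_sum, Matrix.sum_mul]
    exact Finset.sum_congr rfl fun ℓ _ => by
      rw [Matrix.mul_smul, Matrix.smul_mul]
  have hv : ∀ (C : Matrix (Fin p) (Fin p) ℝ) (ℓ : Fin n) (i : Fin p),
      ((fun k => (E * C) k i) ⬝ᵥ (A ℓ).mulVec (fun k => (E * C) k i)) = (Cᵀ * M ℓ * C) i i := by
    intro C ℓ i
    rw [dot_eq_conj_diag_entry]
    congr 1
    rw [hMdef, transpose_mul]
    simp only [Matrix.mul_assoc]
  constructor
  · intro hsurj C hC
    have hC' : C * Cᵀ = 1 := mul_eq_one_comm.mp hC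
    rw [Fintype.linearIndependent_iff]
    intro t ht
    set T := C * diagonal t * Cᵀ with hTdef
    have h1 : ∀ ℓ, trace (T * M ℓ) = 0 := by
      intro ℓ
      rw [hTdef, trace_conj_diag]
      have h := congrFun ht ℓ
      simp only [Finset.sum_apply, Pi.smul_apply, smul_eq_mul, Pi.zero_apply] at h
      rw [← h]
      exact Finset.sum_congr rfl fun i _ => by rw [hv C ℓ i]
    have h2 : ∀ X : Matrix (Fin p) (Fin p) ℝ, X.IsSymm → trace (T * X) = 0 := by
      intro X hX
      obtain ⟨d, hd⟩ := hsurj X hX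
      rw [hψ] at hd
      rw [← hd, Finset.mul_sum, trace_sum]
      refine Finset.sum_eq_zero fun ℓ _ => ?_
      rw [Matrix.mul_smul, trace_smul, h1, smul_zero]
    have hTsymm : T.IsSymm := by
      simp only [hTdef, Matrix.IsSymm, transpose_mul, transpose_transpose, diagonal_transpose]
      simp [Matrix.mul_assoc]
    have hT0 : T = 0 := symm_trace_sq_zero T hTsymm (h2 T hTsymm)
    have hdiag : diagonal t = 0 := by
      have : Cᵀ * T * C = diagonal t := by
        rw [hTdef, show Cᵀ * (C * diagonal t * Cᵀ) * C = (Cᵀ * C) * diagonal t * (Cᵀ * C) by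
          simp only [Matrix.mul_assoc], hC]
        simp
      rw [← this, hT0]
      simp
    intro i
    have := congrFun (congrFun hdiag i) i
    simpa using this
  · intro hLI S hS
    simp only [hψ]
    by_contra hne
    push_neg at hne
    have hSnot : S ∉ Submodule.span ℝ (Set.range M) := by
      intro h
      obtain ⟨d, hd⟩ := (Submodule.mem_span_range_iff_exists_fun ℝ).mp h
      exact hne d hd
    obtain ⟨T, hTsymm, hT0, hTS⟩ := exists_symm_trace_functional M hMsymm S hS hSnot
    obtain ⟨C, t, hC, hTCD⟩ := spectral_real T hTsymm
    have ht0 : ∀ i, t i = 0 := by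
      apply Fintype.linearIndependent_iff.mp (hLI C hC)
      funext ℓ
      simp only [Finset.sum_apply, Pi.smul_apply, smul_eq_mul, Pi.zero_apply]
      have heq : ∑ i, t i * ((fun k => (E * C) k i) ⬝ᵥ (A ℓ).mulVec (fun k => (E * C) k i))
          = ∑ i, t i * (Cᵀ * M ℓ * C) i i :=
        Finset.sum_congr rfl fun i _ => by rw [hv C ℓ i]
      rw [heq, ← trace_conj_diag, ← hTCD, hT0]
    apply hTS
    have hTz : T = 0 := by
      rw [hTCD, show diagonal t = 0 by
        ext i j; by_cases h : i = j <;> simp [diagonal, h, ht0]]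
      simp
    rw [hTz]
    simp
end

section
/- Let ψ : ℝⁿ → S^p be the linear map ψ(d) = Bᵀ (Σ_ℓ d_ℓ A_ℓ) B where A_1,…,A_n ∈ S^m and B ∈ ℝ^{m×p} has orthonormal columns. If for every orthogonal C ∈ ℝ^{p×p} the vectors v_i ∈ ℝⁿ defined by (v_i)_ℓ = (Bc_i)ᵀ A_ℓ (Bc_i), i = 1,…,p, are linearly independent (c_i the columns of C), then the adjoint ψ* is injective; i.e., if Y ∈ S^p satisfies ⟨Bᵀ A_ℓ B, Y⟩ = 0 for all ℓ, then Y = 0. -/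
/-! Diagonalize `Y = C diag(y) Cᵀ` with `C` orthogonal. Then
`tr(Bᵀ A_ℓ B Y) = Σ_i y_i (Bc_i)ᵀ A_ℓ (Bc_i)`, so the vanishing traces say that `y` is the
coefficient vector of a linear relation among the `v_i` built from `C`; hence `y = 0`. -/

open Matrix

theorem Matrix.IsSymm.exists_orthogonal_diagonalization {ι : Type*} [Fintype ι] [DecidableEq ι]
    {Y : Matrix ι ι ℝ} (hY : Y.IsSymm) :
    ∃ (C : Matrix ι ι ℝ) (y : ι → ℝ), Cᵀ * C = 1 ∧ Y = C * diagonal y * Cᵀ := by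
  have hH : Y.IsHermitian := by rwa [IsHermitian, conjTranspose_eq_transpose_of_trivial]
  refine ⟨hH.eigenvectorUnitary, hH.eigenvalues, ?_, ?_⟩
  · simpa [star_eq_conjTranspose] using Unitary.coe_star_mul_self hH.eigenvectorUnitary
  · simpa [star_eq_conjTranspose] using hH.spectral_theorem

theorem Matrix.trace_mul_conj_diagonal {ι κ R : Type*} [Fintype ι] [Fintype κ] [DecidableEq κ]
    [CommRing R] (M : Matrix ι ι R) (C : Matrix ι κ R) (y : κ → R) :
    (M * (C * diagonal y * Cᵀ)).trace = ∑ i, y i * (Cᵀ * M * C) i i := by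
  rw [← Matrix.mul_assoc, ← Matrix.mul_assoc, trace_mul_comm, ← Matrix.mul_assoc,
    ← Matrix.mul_assoc]
  simp only [trace, diag_apply, mul_diagonal, mul_comm]

theorem Matrix.transpose_mul_mul_apply_self {ι κ R : Type*} [Fintype ι] [CommSemiring R]
    (A : Matrix ι ι R) (E : Matrix ι κ R) (i : κ) :
    (Eᵀ * A * E) i i = (fun k => E k i) ⬝ᵥ A *ᵥ (fun k => E k i) := by
  simp only [mul_apply, transpose_apply, dotProduct, mulVec, Finset.mul_sum, Finset.sum_mul,
    mul_assoc]
  exact Finset.sum_comm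

theorem adjoint_injective_of_diag_li_general (n m p : ℕ)
    (A : Fin n → Matrix (Fin m) (Fin m) ℝ)
    (B : Matrix (Fin m) (Fin p) ℝ)
    (h : ∀ C : Matrix (Fin p) (Fin p) ℝ, Cᵀ * C = 1 →
        LinearIndependent ℝ (fun i : Fin p => fun ℓ : Fin n =>
          (fun k => (B * C) k i) ⬝ᵥ (A ℓ).mulVec (fun k => (B * C) k i))) :
    ∀ Y : Matrix (Fin p) (Fin p) ℝ, Y.IsSymm →
      (∀ ℓ, (Bᵀ * A ℓ * B * Y).trace = 0) → Y = 0 := by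
  intro Y hY hTr
  obtain ⟨C, y, hC, rfl⟩ := hY.exists_orthogonal_diagonalization
  suffices hy : y = 0 by simp [hy]
  refine funext (Fintype.linearIndependent_iff.1 (h C hC) y (funext fun ℓ => ?_))
  have hconj : Cᵀ * (Bᵀ * A ℓ * B) * C = (B * C)ᵀ * A ℓ * (B * C) := by
    simp only [transpose_mul, Matrix.mul_assoc]
  have hrel := hTr ℓ
  rw [trace_mul_conj_diagonal, hconj] at hrel
  simpa only [transpose_mul_mul_apply_self, Finset.sum_apply, Pi.smul_apply, smul_eq_mul,
    Pi.zero_apply] using hrel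

/-- If for every orthogonal `C` the diagonal vectors `v_i`,
`(v_i)_ℓ = (Bc_i)ᵀ A_ℓ (Bc_i)`, are linearly independent, then the adjoint of
`ψ(d) = Bᵀ(Σ_ℓ d_ℓ A_ℓ)B` is injective: any symmetric `Y` with
`⟨Bᵀ A_ℓ B, Y⟩ = 0` for all `ℓ` is zero. -/
theorem adjoint_injective_of_diag_li (n m p : ℕ)
    (A : Fin n → Matrix (Fin m) (Fin m) ℝ) (hA : ∀ ℓ, (A ℓ).IsSymm)
    (B : Matrix (Fin m) (Fin p) ℝ) (hB : Bᵀ * B = 1)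
    (h : ∀ C : Matrix (Fin p) (Fin p) ℝ, Cᵀ * C = 1 →
        LinearIndependent ℝ (fun i : Fin p => fun ℓ : Fin n =>
          (fun k => (B * C) k i) ⬝ᵥ (A ℓ).mulVec (fun k => (B * C) k i))) :
    ∀ Y : Matrix (Fin p) (Fin p) ℝ, Y.IsSymm →
      (∀ ℓ, (Bᵀ * A ℓ * B * Y).trace = 0) → Y = 0 :=
  adjoint_injective_of_diag_li_general n m p A B h
end

section
/- Let G(x̄) be PSD of rank r. Robinson's CQ in dual form (the only PSD Y with ⟨G(x̄),Y⟩ = 0 and DG(x̄)*[Y] = 0 is Y = 0) holds if and only if for every m×(m−r) matrix Ē with orthonormal columns spanning Ker G(x̄), the vectors v_{ii}(x̄,Ē), i = 1,…,m−r, with (v_{ii})_ℓ = ē_iᵀ (∂G/∂x_ℓ)(x̄) ē_i, are positively linearly independent. -/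
/-!
A PSD `Y` with `⟨Ḡ, Y⟩ = 0` satisfies `Ḡ Y = 0`, so its range lies in `Ker Ḡ` and
`Y = Ē diag(α) Ēᵀ` with `α ≥ 0` for a suitable orthonormal basis `Ē` of `Ker Ḡ`; conversely every
such matrix is PSD and complementary to `Ḡ`. Since `⟨A_ℓ, Ē diag(α) Ēᵀ⟩ = Σᵢ αᵢ ēᵢᵀ A_ℓ ēᵢ`, a
nonzero `Y` with `DG*[Y] = 0` is the same thing as a nontrivial nonnegative relation among the
vectors `vᵢᵢ(Ē)`.
-/

open Matrix Module

lemma Matrix.trace_mul_mul_diagonal_mul_transpose {ι κ R : Type*} [Fintype ι] [Fintype κ]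
    [DecidableEq κ] [CommRing R] (A : Matrix ι ι R) (E : Matrix ι κ R) (α : κ → R) :
    (A * (E * diagonal α * Eᵀ)).trace = ∑ i, α i * (Eᵀ i ⬝ᵥ A *ᵥ Eᵀ i) := by
  rw [← Matrix.mul_assoc, trace_mul_comm, ← Matrix.mul_assoc, ← Matrix.mul_assoc]
  simp only [trace, diag, mul_diagonal, dotProduct_mulVec, mul_comm (α _)]
  rfl

open scoped MatrixOrder ComplexOrder in
lemma Matrix.PosSemidef.mul_eq_zero_of_trace_mul_eq_zero {n 𝕜 : Type*} [Fintype n] [RCLike 𝕜]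
    {P Q : Matrix n n 𝕜} (hP : P.PosSemidef) (hQ : Q.PosSemidef) (h : (P * Q).trace = 0) :
    P * Q = 0 := by
  classical
  obtain ⟨B, rfl⟩ := CStarAlgebra.nonneg_iff_eq_star_mul_self.mp hP.nonneg
  obtain ⟨C, rfl⟩ := CStarAlgebra.nonneg_iff_eq_star_mul_self.mp hQ.nonneg
  simp only [star_eq_conjTranspose] at h ⊢
  have hBC : B * Cᴴ = 0 := by
    rw [← trace_mul_conjTranspose_self_eq_zero_iff, ← h, conjTranspose_mul,
      conjTranspose_conjTranspose, Matrix.mul_assoc, ← Matrix.mul_assoc Cᴴ, ← Matrix.mul_assoc,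
      trace_mul_comm]
    simp only [Matrix.mul_assoc]
  rw [Matrix.mul_assoc, ← Matrix.mul_assoc B, hBC, Matrix.zero_mul, Matrix.mul_zero]

lemma Matrix.PosSemidef.exists_orthogonal_diagonal {n : Type*} [Fintype n] [DecidableEq n]
    {M : Matrix n n ℝ} (hM : M.PosSemidef) :
    ∃ (U : Matrix n n ℝ) (μ : n → ℝ), Uᵀ * U = 1 ∧ 0 ≤ μ ∧ M = U * diagonal μ * Uᵀ := by
  set U : Matrix n n ℝ := (hM.1.eigenvectorUnitary : Matrix n n ℝ)
  have hstar : star U = Uᵀ := conjTranspose_eq_transpose_of_trivial U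
  refine ⟨U, hM.1.eigenvalues, ?_, hM.eigenvalues_nonneg, ?_⟩
  · rw [← hstar]
    exact (mem_unitaryGroup_iff').mp hM.1.eigenvectorUnitary.2
  · have := hM.1.spectral_theorem
    simp only [RCLike.ofReal_real_eq_id, Function.id_comp] at this
    rwa [← hstar]

lemma Submodule.exists_orthonormal_columns_spanning {n : Type*} [Fintype n]
    (K : Submodule ℝ (EuclideanSpace ℝ n)) {d : ℕ} (hd : finrank ℝ K = d) :
    ∃ E : Matrix n (Fin d) ℝ, Eᵀ * E = 1 ∧ (∀ i, WithLp.toLp 2 (Eᵀ i) ∈ K) ∧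
      ∀ x ∈ K, E *ᵥ (Eᵀ *ᵥ x.ofLp) = x.ofLp := by
  let B : OrthonormalBasis (Fin d) ℝ K := (stdOrthonormalBasis ℝ K).reindex (finCongr hd)
  refine ⟨.of fun k i => (B i : EuclideanSpace ℝ n) k, ?_, fun i => (B i).2, fun x hx => ?_⟩
  · ext i j
    simpa [mul_apply, one_apply, PiLp.inner_apply, mul_comm] using
      orthonormal_iff_ite.mp B.orthonormal i j
  · have hx := congrArg WithLp.ofLp (congrArg Subtype.val (B.sum_repr' ⟨x, hx⟩))
    simp only [Submodule.coe_sum, Submodule.coe_smul, WithLp.ofLp_sum, WithLp.ofLp_smul] at hx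
    conv_rhs => rw [← hx]
    ext k
    simp [mulVec, dotProduct, PiLp.inner_apply, mul_comm]

lemma Matrix.finrank_ker_toEuclideanLin {ι : Type*} [Fintype ι] {m : ℕ} (G : Matrix ι (Fin m) ℝ) :
    finrank ℝ (LinearMap.ker G.toEuclideanLin) = m - G.rank := by
  have h := LinearMap.finrank_range_add_finrank_ker G.toEuclideanLin
  rw [toEuclideanLin_eq_toLin_orthonormal, ← rank_eq_finrank_range_toLin,
    finrank_euclideanSpace_fin] at h
  rw [toEuclideanLin_eq_toLin_orthonormal]
  omega

lemma Matrix.exists_orthonormal_columns_spanning_ker {ι : Type*} [Fintype ι] {m : ℕ}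
    (G : Matrix ι (Fin m) ℝ) :
    ∃ E : Matrix (Fin m) (Fin (m - G.rank)) ℝ, Eᵀ * E = 1 ∧ G * E = 0 ∧
      ∀ x, G *ᵥ x = 0 → E *ᵥ (Eᵀ *ᵥ x) = x := by
  obtain ⟨E, hE, hEK, hproj⟩ :=
    (LinearMap.ker G.toEuclideanLin).exists_orthonormal_columns_spanning
      G.finrank_ker_toEuclideanLin
  refine ⟨E, hE, ?_, fun x hx => hproj (WithLp.toLp 2 x) ?_⟩
  · ext k i
    simpa [mulVec, dotProduct, mul_apply] using congrFun (congrArg WithLp.ofLp (hEK i)) k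
  · simp [hx]

lemma Matrix.PosSemidef.exists_eq_mul_diagonal_mul_transpose_of_mul_eq_zero {ι : Type*}
    [Fintype ι] {m : ℕ} {G : Matrix ι (Fin m) ℝ} {Y : Matrix (Fin m) (Fin m) ℝ}
    (hY : Y.PosSemidef) (hGY : G * Y = 0) :
    ∃ (E : Matrix (Fin m) (Fin (m - G.rank)) ℝ) (μ : Fin (m - G.rank) → ℝ),
      Eᵀ * E = 1 ∧ G * E = 0 ∧ 0 ≤ μ ∧ Y = E * diagonal μ * Eᵀ := by
  obtain ⟨E₀, hE₀, hGE₀, hproj⟩ := G.exists_orthonormal_columns_spanning_ker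
  have hPY : E₀ * E₀ᵀ * Y = Y := by
    refine ext_iff_mulVec.mpr fun v => ?_
    rw [← mulVec_mulVec, ← mulVec_mulVec]
    exact hproj _ (by rw [mulVec_mulVec, hGY, zero_mulVec])
  have hYP : Y * (E₀ * E₀ᵀ) = Y := by
    have hYt : Yᵀ = Y := hY.1.eq
    simpa [hYt, Matrix.mul_assoc] using congrArg (fun M => Mᵀ) hPY
  obtain ⟨U, μ, hU, hμ, hM⟩ := (hY.conjTranspose_mul_mul_same E₀).exists_orthogonal_diagonal
  rw [conjTranspose_eq_transpose_of_trivial] at hM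
  refine ⟨E₀ * U, μ, ?_, by rw [← Matrix.mul_assoc, hGE₀, Matrix.zero_mul], hμ, ?_⟩
  · rw [transpose_mul, Matrix.mul_assoc, ← Matrix.mul_assoc E₀ᵀ, hE₀, Matrix.one_mul, hU]
  · calc Y = E₀ * E₀ᵀ * Y * (E₀ * E₀ᵀ) := by rw [hPY, hYP]
      _ = E₀ * (E₀ᵀ * Y * E₀) * E₀ᵀ := by simp only [Matrix.mul_assoc]
      _ = E₀ * U * diagonal μ * (E₀ * U)ᵀ := by
        rw [hM, transpose_mul]
        simp only [Matrix.mul_assoc]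

theorem robinson_iff_pos_li_all_bases_general (n m r : ℕ)
    (Gbar : Matrix (Fin m) (Fin m) ℝ) (hG : Gbar.PosSemidef) (hrank : Gbar.rank = r)
    (A : Fin n → Matrix (Fin m) (Fin m) ℝ) :
    (∀ Y : Matrix (Fin m) (Fin m) ℝ, Y.PosSemidef → (Gbar * Y).trace = 0 →
        (∀ ℓ, (A ℓ * Y).trace = 0) → Y = 0) ↔
    (∀ E : Matrix (Fin m) (Fin (m - r)) ℝ, Eᵀ * E = 1 → Gbar * E = 0 →
        ∀ α : Fin (m - r) → ℝ, (∀ i, 0 ≤ α i) →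
          (∑ i, α i • (fun ℓ : Fin n =>
            (fun k => E k i) ⬝ᵥ (A ℓ).mulVec (fun k => E k i))) = 0 →
          ∀ i, α i = 0) := by
  subst hrank
  have hsum_iff (E : Matrix (Fin m) (Fin (m - Gbar.rank)) ℝ) (α : Fin (m - Gbar.rank) → ℝ) :
      (∑ i, α i • fun ℓ => (fun k => E k i) ⬝ᵥ A ℓ *ᵥ fun k => E k i) = 0 ↔
        ∀ ℓ, (A ℓ * (E * diagonal α * Eᵀ)).trace = 0 := by
    simp only [funext_iff, Finset.sum_apply, Pi.smul_apply, smul_eq_mul, Pi.zero_apply,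
      trace_mul_mul_diagonal_mul_transpose]
    rfl
  constructor
  · intro hCQ E hE hGE α hα hsum
    have hY : E * diagonal α * Eᵀ = 0 := by
      refine hCQ _ ?_ ?_ ((hsum_iff E α).mp hsum)
      · simpa [conjTranspose_eq_transpose_of_trivial] using
          (posSemidef_diagonal_iff.mpr hα).mul_mul_conjTranspose_same E
      · rw [← Matrix.mul_assoc, ← Matrix.mul_assoc, hGE]
        simp
    have hdiag : diagonal α = Eᵀ * (E * diagonal α * Eᵀ) * E := by
      simp only [← Matrix.mul_assoc, hE, Matrix.one_mul]
      rw [Matrix.mul_assoc, hE, Matrix.mul_one]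
    have hα0 : α = 0 := by simpa [hY] using hdiag
    exact congrFun hα0
  · intro hPLI Y hY hGY hAY
    obtain ⟨E, μ, hE, hGE, hμ, rfl⟩ :=
      hY.exists_eq_mul_diagonal_mul_transpose_of_mul_eq_zero
        (hG.mul_eq_zero_of_trace_mul_eq_zero hY hGY)
    have hμ0 : μ = 0 := funext (hPLI E hE hGE μ hμ ((hsum_iff E μ).mpr hAY))
    simp [hμ0]

/-- Robinson's CQ in dual form (the only PSD `Y` with `⟨G(x̄),Y⟩ = 0` and
`DG(x̄)*[Y] = 0` is `Y = 0`) holds iff for every `Ē` with orthonormal columns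
spanning `Ker G(x̄)`, the vectors `v_{ii}(x̄,Ē)` are positively linearly
independent. -/
theorem robinson_iff_pos_li_all_bases (n m r : ℕ)
    (Gbar : Matrix (Fin m) (Fin m) ℝ) (hG : Gbar.PosSemidef) (hrank : Gbar.rank = r)
    (A : Fin n → Matrix (Fin m) (Fin m) ℝ) (hA : ∀ ℓ, (A ℓ).IsSymm) :
    (∀ Y : Matrix (Fin m) (Fin m) ℝ, Y.PosSemidef → (Gbar * Y).trace = 0 →
        (∀ ℓ, (A ℓ * Y).trace = 0) → Y = 0) ↔
    (∀ E : Matrix (Fin m) (Fin (m - r)) ℝ, Eᵀ * E = 1 → Gbar * E = 0 →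
        ∀ α : Fin (m - r) → ℝ, (∀ i, 0 ≤ α i) →
          (∑ i, α i • (fun ℓ : Fin n =>
            (fun k => E k i) ⬝ᵥ (A ℓ).mulVec (fun k => E k i))) = 0 →
          ∀ i, α i = 0) :=
  robinson_iff_pos_li_all_bases_general n m r Gbar hG hrank A
end
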